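/- arXiv:math/0611685 — 2 statements merged into one kernel-verified Lean document; each statement's English description precedes it below -/
import Mathlib

section
/- The estimator p̂(n) = f_b(n)/F_b(n) is admissible for p_θ(n) = bⁿ/(b+θ)ⁿ under squared error loss: there is no estimator p̃: ℕ → [0,1] with R(p̃, θ) ≤ R(p̂, θ) for all θ ≥ 0 and strict inequality for some θ₀ ≥ 0. -/
open Real MeasureTheory Set Filter

noncomputable def pois (m : ℝ) (n : ℕ) : ℝ := m ^ n * Real.exp (-m) / n.factorial

noncomputable def poisCDF (m : ℝ) (n : ℕ) : ℝ := ∑ k ∈ Finset.range (n + 1), pois m k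

lemma pois_nonneg {m : ℝ} (hm : 0 ≤ m) (n : ℕ) : 0 ≤ pois m n := by
  unfold pois; positivity

lemma pois_pos {m : ℝ} (hm : 0 < m) (n : ℕ) : 0 < pois m n := by
  unfold pois; positivity

lemma poisCDF_pos {m : ℝ} (hm : 0 < m) (n : ℕ) : 0 < poisCDF m n :=
  Finset.sum_pos (fun k _ => pois_pos hm k) ⟨0, by simp⟩

lemma pois_le_poisCDF {m : ℝ} (hm : 0 ≤ m) (n : ℕ) : pois m n ≤ poisCDF m n :=
  Finset.single_le_sum (f := pois m) (fun k _ => pois_nonneg hm k)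
    (Finset.self_mem_range_succ n)

lemma summable_pois (m : ℝ) : Summable (fun n => pois m n) := by
  refine ((Real.summable_pow_div_factorial m).mul_right (Real.exp (-m))).congr fun n => ?_
  unfold pois; ring

lemma hasDerivAt_pois (n : ℕ) (x : ℝ) :
    HasDerivAt (fun y => pois y (n + 1)) (pois x n - pois x (n + 1)) x := by
  have h1 : HasDerivAt (fun y : ℝ => y ^ (n + 1)) ((n + 1 : ℕ) * x ^ n) x := by
    simpa using hasDerivAt_pow (n + 1) x
  have h2 : HasDerivAt (fun y : ℝ => Real.exp (-y)) (-Real.exp (-x)) x := by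
    simpa [Function.comp_def] using (Real.hasDerivAt_exp (-x)).comp x (hasDerivAt_neg x)
  have h3 := (h1.mul h2).div_const ((n + 1).factorial : ℝ)
  refine h3.congr_deriv ?_
  have hf : ((n + 1).factorial : ℝ) = (n + 1) * n.factorial := by
    rw [Nat.factorial_succ]; push_cast; ring
  have hn : (n.factorial : ℝ) ≠ 0 := Nat.cast_ne_zero.2 n.factorial_ne_zero
  unfold pois
  rw [hf]
  field_simp
  push_cast
  ring

lemma hasDerivAt_poisCDF (n : ℕ) (x : ℝ) :
    HasDerivAt (fun y => poisCDF y n) (-pois x n) x := by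
  induction n with
  | zero =>
    have h2 : HasDerivAt (fun y : ℝ => Real.exp (-y)) (-Real.exp (-x)) x := by
      simpa [Function.comp_def] using (Real.hasDerivAt_exp (-x)).comp x (hasDerivAt_neg x)
    have : (fun y => poisCDF y 0) = fun y : ℝ => Real.exp (-y) := by
      funext y; simp [poisCDF, pois]
    rw [this]
    exact h2.congr_deriv (by simp [pois])
  | succ n ih =>
    have h := ih.add (hasDerivAt_pois n x)
    have : (fun y => poisCDF y (n + 1)) = fun y => poisCDF y n + pois y (n + 1) := by
      funext y; simp [poisCDF, Finset.sum_range_succ]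
    rw [this]
    exact h.congr_deriv (by ring)

lemma tendsto_pois_atTop (k : ℕ) : Tendsto (fun x => pois x k) atTop (nhds 0) := by
  have h := tendsto_pow_mul_exp_neg_atTop_nhds_zero k
  have := h.div_const (k.factorial : ℝ)
  simpa [pois] using this

lemma tendsto_poisCDF_atTop (n : ℕ) : Tendsto (fun x => poisCDF x n) atTop (nhds 0) := by
  have : Tendsto (fun x => ∑ k ∈ Finset.range (n + 1), pois x k) atTop
      (nhds (∑ k ∈ Finset.range (n + 1), (0 : ℝ))) :=
    tendsto_finset_sum _ fun k _ => tendsto_pois_atTop k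
  simpa [poisCDF] using this

lemma tendsto_shift (b : ℝ) {f : ℕ → ℝ → ℝ} (n : ℕ)
    (h : Tendsto (fun x => f n x) atTop (nhds 0)) :
    Tendsto (fun θ => f n (b + θ)) atTop (nhds 0) :=
  h.comp (tendsto_atTop_add_const_left atTop b tendsto_id)

section main
variable {b : ℝ} (hb : 0 < b)

include hb

lemma integral_pois_shift (n : ℕ) :
    IntegrableOn (fun θ => pois (b + θ) n) (Ioi 0) ∧
      ∫ θ in Ioi 0, pois (b + θ) n = poisCDF b n := by
  have hderiv : ∀ θ ∈ Ici (0 : ℝ),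
      HasDerivAt (fun t => -poisCDF (b + t) n) (pois (b + θ) n) θ := by
    intro θ _
    have h := ((hasDerivAt_poisCDF n (b + θ)).comp θ ((hasDerivAt_id θ).const_add b)).neg
    exact h.congr_deriv (by simp)
  have hpos : ∀ θ ∈ Ioi (0 : ℝ), 0 ≤ pois (b + θ) n := fun θ hθ =>
    pois_nonneg (by linarith [mem_Ioi.1 hθ]) n
  have htend : Tendsto (fun θ => -poisCDF (b + θ) n) atTop (nhds 0) := by
    simpa using (tendsto_shift b (f := fun n x => poisCDF x n) n (tendsto_poisCDF_atTop n)).neg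
  refine ⟨integrableOn_Ioi_deriv_of_nonneg' hderiv hpos htend, ?_⟩
  rw [integral_Ioi_of_hasDerivAt_of_nonneg' hderiv hpos htend]
  simp

lemma integral_U_shift (n : ℕ) :
    IntegrableOn (fun θ => b ^ n * Real.exp (-(b + θ)) / n.factorial) (Ioi 0) ∧
      ∫ θ in Ioi 0, b ^ n * Real.exp (-(b + θ)) / n.factorial = pois b n := by
  have hderiv : ∀ θ ∈ Ici (0 : ℝ),
      HasDerivAt (fun t => -(b ^ n * Real.exp (-(b + t)) / n.factorial))
        (b ^ n * Real.exp (-(b + θ)) / n.factorial) θ := by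
    intro θ _
    have h2 : HasDerivAt (fun t : ℝ => Real.exp (-(b + t))) (-Real.exp (-(b + θ))) θ := by
      have := (Real.hasDerivAt_exp (-(b + θ))).comp θ
        (((hasDerivAt_id θ).const_add b).neg)
      exact this.congr_deriv (by ring)
    have := ((h2.const_mul (b ^ n)).div_const (n.factorial : ℝ)).neg
    exact this.congr_deriv (by ring)
  have hpos : ∀ θ ∈ Ioi (0 : ℝ), 0 ≤ b ^ n * Real.exp (-(b + θ)) / n.factorial := by
    intro θ _; positivity
  have htend : Tendsto (fun θ => -(b ^ n * Real.exp (-(b + θ)) / n.factorial)) atTop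
      (nhds 0) := by
    have h1 : Tendsto (fun θ : ℝ => Real.exp (-(b + θ))) atTop (nhds 0) := by
      have := Real.tendsto_exp_neg_atTop_nhds_zero.const_mul (Real.exp (-b))
      simpa [neg_add, Real.exp_add, mul_comm] using this
    have := ((h1.const_mul (b ^ n)).div_const (n.factorial : ℝ)).neg
    simpa using this
  refine ⟨integrableOn_Ioi_deriv_of_nonneg' hderiv hpos htend, ?_⟩
  rw [integral_Ioi_of_hasDerivAt_of_nonneg' hderiv hpos htend]
  simp [pois, div_eq_mul_inv]

lemma ratio_mem (n : ℕ) {θ : ℝ} (hθ : 0 ≤ θ) :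
    0 ≤ b ^ n / (b + θ) ^ n ∧ b ^ n / (b + θ) ^ n ≤ 1 := by
  have h1 : (0:ℝ) < b ^ n := pow_pos hb n
  have h2 : b ^ n ≤ (b + θ) ^ n := pow_le_pow_left₀ hb.le (by linarith) n
  have h3 : (0:ℝ) < (b + θ) ^ n := pow_pos (by linarith) n
  constructor
  · positivity
  · rw [div_le_one h3]; exact h2

/-- squared-error loss term -/
noncomputable def T (b c : ℝ) (n : ℕ) (θ : ℝ) : ℝ :=
  (c - b ^ n / (b + θ) ^ n) ^ 2 * pois (b + θ) n

omit hb in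
lemma T_meas (b c : ℝ) (n : ℕ) : Measurable (T b c n) := by
  unfold T pois
  fun_prop

include hb

lemma T_nonneg (c : ℝ) (n : ℕ) {θ : ℝ} (hθ : 0 ≤ θ) : 0 ≤ T b c n θ :=
  mul_nonneg (sq_nonneg _) (pois_nonneg (by linarith) n)

lemma T_le {c : ℝ} (hc : c ∈ Set.Icc (0:ℝ) 1) (n : ℕ) {θ : ℝ} (hθ : 0 ≤ θ) :
    T b c n θ ≤ pois (b + θ) n := by
  obtain ⟨hs0, hs1⟩ := ratio_mem hb n hθ
  have hP : 0 ≤ pois (b + θ) n := pois_nonneg (by linarith) n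
  have h1 : (c - b ^ n / (b + θ) ^ n) ^ 2 ≤ 1 := by nlinarith [hc.1, hc.2]
  calc T b c n θ ≤ 1 * pois (b + θ) n := mul_le_mul_of_nonneg_right h1 hP
  _ = pois (b + θ) n := one_mul _

lemma T_integrableOn {c : ℝ} (hc : c ∈ Set.Icc (0:ℝ) 1) (n : ℕ) :
    IntegrableOn (T b c n) (Ioi 0) := by
  refine MeasureTheory.Integrable.mono (integral_pois_shift hb n).1
    (T_meas b c n).aestronglyMeasurable ?_
  refine (ae_restrict_iff' measurableSet_Ioi).2 (ae_of_all _ fun θ hθ => ?_)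
  have hθ' : (0:ℝ) ≤ θ := (mem_Ioi.1 hθ).le
  rw [Real.norm_eq_abs, Real.norm_eq_abs, abs_of_nonneg (T_nonneg hb c n hθ'),
    abs_of_nonneg (pois_nonneg (by linarith) n)]
  exact T_le hb hc n hθ'

lemma q_mem (n : ℕ) : pois b n / poisCDF b n ∈ Set.Icc (0:ℝ) 1 := by
  have hA := poisCDF_pos hb n
  exact ⟨div_nonneg (pois_nonneg hb.le n) hA.le,
    (div_le_one hA).2 (pois_le_poisCDF hb.le n)⟩

lemma J_identity {c : ℝ} (hc : c ∈ Set.Icc (0:ℝ) 1) (n : ℕ) :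
    ∫ θ in Ioi 0, T b c n θ =
      (∫ θ in Ioi 0, T b (pois b n / poisCDF b n) n θ) +
        poisCDF b n * (c - pois b n / poisCDF b n) ^ 2 := by
  set A := poisCDF b n with hA_def
  set B := pois b n with hB_def
  have hA : 0 < A := poisCDF_pos hb n
  have hq : B / A ∈ Set.Icc (0:ℝ) 1 := q_mem hb n
  have heq : EqOn (T b c n)
      (fun θ => T b (B / A) n θ +
        ((c ^ 2 - (B / A) ^ 2) * pois (b + θ) n -
          (2 * (c - B / A)) * (b ^ n * Real.exp (-(b + θ)) / n.factorial))) (Ioi 0) := by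
    intro θ hθ
    have hpow : ((b + θ) : ℝ) ^ n ≠ 0 := pow_ne_zero _ (by have := mem_Ioi.1 hθ; positivity)
    unfold T pois
    field_simp
    ring
  rw [setIntegral_congr_fun measurableSet_Ioi heq]
  have hI1 : IntegrableOn (fun θ => (c ^ 2 - (B / A) ^ 2) * pois (b + θ) n) (Ioi 0) :=
    (integral_pois_shift hb n).1.const_mul _
  have hI2 : IntegrableOn
      (fun θ => (2 * (c - B / A)) * (b ^ n * Real.exp (-(b + θ)) / n.factorial)) (Ioi 0) :=
    (integral_U_shift hb n).1.const_mul _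
  have hI12 : IntegrableOn (fun θ => (c ^ 2 - (B / A) ^ 2) * pois (b + θ) n -
      (2 * (c - B / A)) * (b ^ n * Real.exp (-(b + θ)) / n.factorial)) (Ioi 0) := hI1.sub hI2
  rw [integral_add (T_integrableOn hb hq n) hI12]
  rw [integral_sub hI1 hI2, integral_const_mul, integral_const_mul,
    (integral_pois_shift hb n).2, ← hA_def, (integral_U_shift hb n).2, ← hB_def]
  have halg : (c ^ 2 - (B / A) ^ 2) * A - 2 * (c - B / A) * B = A * (c - B / A) ^ 2 := by
    field_simp
    ring
  linarith

lemma J_nonneg {c : ℝ} (n : ℕ) : 0 ≤ ∫ θ in Ioi 0, T b c n θ :=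
  setIntegral_nonneg measurableSet_Ioi fun θ hθ => T_nonneg hb c n (mem_Ioi.1 hθ).le

lemma Jq_le (n : ℕ) :
    ∫ θ in Ioi 0, T b (pois b n / poisCDF b n) n θ ≤ 2 * pois b n := by
  set A := poisCDF b n with hA_def
  set B := pois b n with hB_def
  have hA : 0 < A := poisCDF_pos hb n
  have hq := q_mem hb n
  have hbound : ∀ θ ∈ Ioi (0:ℝ), T b (B / A) n θ ≤
      (B / A) * pois (b + θ) n + b ^ n * Real.exp (-(b + θ)) / n.factorial := by
    intro θ hθ
    have hθ' : (0:ℝ) ≤ θ := (mem_Ioi.1 hθ).le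
    obtain ⟨hs0, hs1⟩ := ratio_mem hb n hθ'
    have hP : 0 ≤ pois (b + θ) n := pois_nonneg (by linarith) n
    have hU : b ^ n / (b + θ) ^ n * pois (b + θ) n
        = b ^ n * Real.exp (-(b + θ)) / n.factorial := by
      have hpow : ((b + θ) : ℝ) ^ n ≠ 0 := pow_ne_zero _ (by positivity)
      unfold pois
      field_simp
    have h1 : (B / A - b ^ n / (b + θ) ^ n) ^ 2 ≤ B / A + b ^ n / (b + θ) ^ n := by
      nlinarith [hq.1, hq.2]
    calc T b (B / A) n θ ≤ (B / A + b ^ n / (b + θ) ^ n) * pois (b + θ) n :=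
          mul_le_mul_of_nonneg_right h1 hP
      _ = (B / A) * pois (b + θ) n + b ^ n / (b + θ) ^ n * pois (b + θ) n := by ring
      _ = (B / A) * pois (b + θ) n + b ^ n * Real.exp (-(b + θ)) / n.factorial := by rw [hU]
  have hInt2 : IntegrableOn (fun θ => (B / A) * pois (b + θ) n +
      b ^ n * Real.exp (-(b + θ)) / n.factorial) (Ioi 0) :=
    ((integral_pois_shift hb n).1.const_mul _).add (integral_U_shift hb n).1
  calc ∫ θ in Ioi 0, T b (B / A) n θ
      ≤ ∫ θ in Ioi 0, ((B / A) * pois (b + θ) n +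
          b ^ n * Real.exp (-(b + θ)) / n.factorial) :=
        setIntegral_mono_on (T_integrableOn hb hq n) hInt2 measurableSet_Ioi hbound
    _ = (B / A) * A + B := by
        rw [integral_add ((integral_pois_shift hb n).1.const_mul _) (integral_U_shift hb n).1,
          integral_const_mul, (integral_pois_shift hb n).2, ← hA_def,
          (integral_U_shift hb n).2, ← hB_def]
    _ = 2 * B := by rw [div_mul_cancel₀ _ hA.ne']; ring

end main


/-- risk of an estimator `p` under squared error loss at signal mean `θ` -/
noncomputable def risk (b : ℝ) (p : ℕ → ℝ) (θ : ℝ) : ℝ :=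
  ∑' n : ℕ, (p n - b ^ n / (b + θ) ^ n) ^ 2 * pois (b + θ) n



theorem stmt_9 (b : ℝ) (hb : 0 < b) :
    ¬ ∃ p : ℕ → ℝ, (∀ n, p n ∈ Set.Icc (0 : ℝ) 1) ∧
      (∀ θ : ℝ, 0 ≤ θ → risk b p θ ≤ risk b (fun n => pois b n / poisCDF b n) θ) ∧
      (∃ θ₀ : ℝ, 0 ≤ θ₀ ∧ risk b p θ₀ < risk b (fun n => pois b n / poisCDF b n) θ₀) := by
  rintro ⟨p, hp, hle, θ₀, hθ₀, hlt⟩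
  set q : ℕ → ℝ := fun n => pois b n / poisCDF b n with hq_def
  have hqm : ∀ n, q n ∈ Set.Icc (0:ℝ) 1 := fun n => q_mem hb n
  have hpq : p = q := by
    have key : ∀ (r : ℕ → ℝ), (∀ n, r n ∈ Set.Icc (0:ℝ) 1) →
        ∫⁻ θ in Ioi 0, ENNReal.ofReal (risk b r θ) =
          ∑' n, ENNReal.ofReal (∫ θ in Ioi 0, T b (r n) n θ) := by
      intro r hr
      have h1 : ∀ θ ∈ Ioi (0:ℝ), ENNReal.ofReal (risk b r θ)
          = ∑' n, ENNReal.ofReal (T b (r n) n θ) := by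
        intro θ hθ
        have hθ' : (0:ℝ) ≤ θ := (mem_Ioi.1 hθ).le
        have hsumm : Summable (fun n => T b (r n) n θ) :=
          Summable.of_nonneg_of_le (fun n => T_nonneg hb _ n hθ')
            (fun n => T_le hb (hr n) n hθ') (summable_pois (b + θ))
        rw [show risk b r θ = ∑' n, T b (r n) n θ from rfl]
        exact ENNReal.ofReal_tsum_of_nonneg (fun n => T_nonneg hb _ n hθ') hsumm
      rw [setLIntegral_congr_fun_ae measurableSet_Ioi (ae_of_all _ h1),
        lintegral_tsum (fun n => ((T_meas b (r n) n).ennreal_ofReal).aemeasurable)]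
      congr 1
      funext n
      rw [← ofReal_integral_eq_lintegral_ofReal (T_integrableOn hb (hr n) n)
        ((ae_restrict_iff' measurableSet_Ioi).2
          (ae_of_all _ fun θ hθ => T_nonneg hb _ n (mem_Ioi.1 hθ).le))]
    have hLpq : ∫⁻ θ in Ioi 0, ENNReal.ofReal (risk b p θ) ≤
        ∫⁻ θ in Ioi 0, ENNReal.ofReal (risk b q θ) := by
      refine lintegral_mono_ae ?_
      refine (ae_restrict_iff' measurableSet_Ioi).2 (ae_of_all _ fun θ hθ => ?_)
      exact ENNReal.ofReal_le_ofReal (hle θ (mem_Ioi.1 hθ).le)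
    rw [key p hp, key q hqm] at hLpq
    have hfin : ∑' n, ENNReal.ofReal (∫ θ in Ioi 0, T b (q n) n θ) ≠ ⊤ := by
      have hle2 : ∀ n, ENNReal.ofReal (∫ θ in Ioi 0, T b (q n) n θ)
          ≤ ENNReal.ofReal (2 * pois b n) :=
        fun n => ENNReal.ofReal_le_ofReal (Jq_le hb n)
      have hsum2 : Summable (fun n => 2 * pois b n) := (summable_pois b).mul_left 2
      have h := ENNReal.tsum_le_tsum hle2
      rw [← ENNReal.ofReal_tsum_of_nonneg
        (fun n => by have := pois_nonneg hb.le n; linarith) hsum2] at h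
      exact ne_top_of_le_ne_top ENNReal.ofReal_ne_top h
    have hsplit : ∀ n, ENNReal.ofReal (∫ θ in Ioi 0, T b (p n) n θ) =
        ENNReal.ofReal (∫ θ in Ioi 0, T b (q n) n θ)
          + ENNReal.ofReal (poisCDF b n * (p n - q n) ^ 2) := by
      intro n
      rw [J_identity hb (hp n) n,
        ENNReal.ofReal_add (J_nonneg hb n)
          (mul_nonneg (poisCDF_pos hb n).le (sq_nonneg _))]
    have hsum_split : (∑' n, ENNReal.ofReal (∫ θ in Ioi 0, T b (q n) n θ))
        + ∑' n, ENNReal.ofReal (poisCDF b n * (p n - q n) ^ 2)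
        ≤ ∑' n, ENNReal.ofReal (∫ θ in Ioi 0, T b (q n) n θ) := by
      rw [← ENNReal.tsum_add]
      calc ∑' n, (ENNReal.ofReal (∫ θ in Ioi 0, T b (q n) n θ)
            + ENNReal.ofReal (poisCDF b n * (p n - q n) ^ 2))
          = ∑' n, ENNReal.ofReal (∫ θ in Ioi 0, T b (p n) n θ) :=
            (tsum_congr fun n => (hsplit n).symm)
        _ ≤ _ := hLpq
    have hzero : ∑' n, ENNReal.ofReal (poisCDF b n * (p n - q n) ^ 2) = 0 := by
      have hS : ∑' n, ENNReal.ofReal (poisCDF b n * (p n - q n) ^ 2) ≤ 0 := by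
        have := (ENNReal.add_le_add_iff_left hfin
          (b := ∑' n, ENNReal.ofReal (poisCDF b n * (p n - q n) ^ 2)) (c := 0)).1
        exact this (by simpa using hsum_split)
      exact le_antisymm hS (by simp)
    funext n
    have h0 := ENNReal.tsum_eq_zero.mp hzero n
    rw [ENNReal.ofReal_eq_zero] at h0
    have hA := poisCDF_pos hb n
    have h2 : (p n - q n) ^ 2 = 0 := by nlinarith [sq_nonneg (p n - q n)]
    have := pow_eq_zero_iff (n := 2) (by norm_num) |>.mp h2
    linarith
  rw [hpq] at hlt
  exact lt_irrefl _ hlt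
end

section
/- Under the prior e^{-αθ} on θ ∈ [0,∞), the posterior probability of the event {S > 0} given X = n equals F_{(1+α)b}(n−1)/F_{(1+α)b}(n) = 1 − f_{(1+α)b}(n)/F_{(1+α)b}(n). -/
open MeasureTheory Real

/-- `P_θ(B = k, X = n)` for `k ≤ n` in the signal plus background model -/
noncomputable def jointBX (b θ : ℝ) (k n : ℕ) : ℝ :=
  b ^ k * θ ^ (n - k) * Real.exp (-(b + θ)) / (k.factorial * (n - k).factorial)

lemma aux_integrableOn (m : ℕ) {c : ℝ} (hc : 0 < c) :
    IntegrableOn (fun t : ℝ => t ^ m * Real.exp (-(c * t))) (Set.Ioi 0) := by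
  have h := integrableOn_rpow_mul_exp_neg_mul_rpow (p := 1) (s := m) (b := c)
    (lt_of_lt_of_le neg_one_lt_zero (Nat.cast_nonneg m)) zero_lt_one hc
  refine h.congr_fun (fun t ht => ?_) measurableSet_Ioi
  rw [Set.mem_Ioi] at ht
  dsimp only
  rw [Real.rpow_natCast, Real.rpow_one, neg_mul]

lemma aux_integral (m : ℕ) {c : ℝ} (hc : 0 < c) :
    ∫ t in Set.Ioi (0 : ℝ), t ^ m * Real.exp (-(c * t))
      = m.factorial / c ^ (m + 1) := by
  have h := Real.integral_rpow_mul_exp_neg_mul_Ioi (a := (m : ℝ) + 1) (r := c)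
    (by positivity) hc
  rw [show ((m : ℝ) + 1 - 1) = (m : ℝ) by ring] at h
  have he : ∀ t ∈ Set.Ioi (0:ℝ), t ^ ((m : ℝ)) * Real.exp (-(c * t))
      = t ^ m * Real.exp (-(c * t)) := fun t _ => by rw [Real.rpow_natCast]
  rw [setIntegral_congr_fun measurableSet_Ioi he] at h
  rw [h, Real.Gamma_nat_eq_factorial,
    show ((m:ℝ)+1) = ((m+1:ℕ):ℝ) by push_cast; ring, Real.rpow_natCast]
  rw [div_pow, one_pow]
  ring

lemma jointBX_mul_exp (b α θ : ℝ) (k n : ℕ) :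
    jointBX b θ k n * Real.exp (-α * θ)
      = (b ^ k * Real.exp (-b) / (k.factorial * (n - k).factorial))
        * (θ ^ (n - k) * Real.exp (-((1 + α) * θ))) := by
  have h1 : Real.exp (-(b + θ)) * Real.exp (-α * θ)
      = Real.exp (-b) * Real.exp (-((1 + α) * θ)) := by
    rw [← Real.exp_add, ← Real.exp_add]; congr 1; ring
  unfold jointBX
  rw [div_mul_eq_mul_div, mul_assoc, h1]
  ring

lemma integrable_jointBX (b α : ℝ) (hα : 0 ≤ α) (k n : ℕ) :
    IntegrableOn (fun θ => jointBX b θ k n * Real.exp (-α * θ)) (Set.Ioi 0) := by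
  have hc : (0:ℝ) < 1 + α := by linarith
  simp_rw [jointBX_mul_exp]
  exact (aux_integrableOn (n - k) hc).const_mul _

lemma integral_jointBX (b α : ℝ) (hα : 0 ≤ α) {k n : ℕ} (hk : k ≤ n) :
    ∫ θ in Set.Ioi (0:ℝ), jointBX b θ k n * Real.exp (-α * θ)
      = (Real.exp (α * b) / (1 + α) ^ (n + 1)) * pois ((1 + α) * b) k := by
  have hc : (0:ℝ) < 1 + α := by linarith
  simp_rw [jointBX_mul_exp]
  rw [integral_const_mul, aux_integral (n - k) hc]
  unfold pois
  have hsplit : (1 + α) ^ (n + 1) = (1 + α) ^ (n - k + 1) * (1 + α) ^ k := by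
    rw [← pow_add]; congr 1; omega
  have he : Real.exp (-((1 + α) * b)) = Real.exp (-(α * b)) * Real.exp (-b) := by
    rw [← Real.exp_add]; congr 1; ring
  rw [he, hsplit, mul_pow, Real.exp_neg (α * b)]
  have h1 : Real.exp (α * b) ≠ 0 := Real.exp_ne_zero _
  have h2 : ((k.factorial : ℝ)) ≠ 0 := by positivity
  have h3 : (((n - k).factorial : ℝ)) ≠ 0 := by positivity
  have h4 : (1 + α) ≠ 0 := ne_of_gt hc
  field_simp

lemma pois_expand (b θ : ℝ) (n : ℕ) :
    pois (b + θ) n = ∑ k ∈ Finset.range (n + 1), jointBX b θ k n := by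
  unfold pois jointBX
  rw [add_pow, Finset.sum_mul, Finset.sum_div]
  refine Finset.sum_congr rfl (fun k hk => ?_)
  have hk' : k ≤ n := Nat.lt_succ_iff.mp (Finset.mem_range.mp hk)
  rw [Nat.cast_choose ℝ hk']
  have h2 : ((k.factorial : ℝ)) ≠ 0 := by positivity
  have h3 : (((n - k).factorial : ℝ)) ≠ 0 := by positivity
  have h4 : ((n.factorial : ℝ)) ≠ 0 := by positivity
  field_simp

theorem stmt_13 (b α : ℝ) (hb : 0 < b) (hα : 0 ≤ α) (n : ℕ) (hn : 1 ≤ n) :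
    (∫ θ in Set.Ioi (0 : ℝ), (∑ k ∈ Finset.range n, jointBX b θ k n) * Real.exp (-α * θ))
      / (∫ θ in Set.Ioi (0 : ℝ), pois (b + θ) n * Real.exp (-α * θ))
      = poisCDF ((1 + α) * b) (n - 1) / poisCDF ((1 + α) * b) n
    ∧ poisCDF ((1 + α) * b) (n - 1) / poisCDF ((1 + α) * b) n
      = 1 - pois ((1 + α) * b) n / poisCDF ((1 + α) * b) n := by
  have hc : (0:ℝ) < 1 + α := by linarith
  set m := (1 + α) * b with hm
  have hmpos : 0 < m := by positivity
  have hF : ∀ N, 0 < poisCDF m N := by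
    intro N
    refine Finset.sum_pos (fun k _ => ?_) ⟨0, by simp⟩
    unfold pois; positivity
  have hC : (Real.exp (α * b) / (1 + α) ^ (n + 1)) ≠ 0 := by positivity
  have hnum : (∫ θ in Set.Ioi (0 : ℝ),
      (∑ k ∈ Finset.range n, jointBX b θ k n) * Real.exp (-α * θ))
      = (Real.exp (α * b) / (1 + α) ^ (n + 1)) * poisCDF m (n - 1) := by
    simp_rw [Finset.sum_mul]
    rw [integral_finset_sum _ (fun k _ => integrable_jointBX b α hα k n),
      Finset.sum_congr rfl
        (fun k hk => integral_jointBX b α hα (le_of_lt (Finset.mem_range.mp hk))),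
      ← Finset.mul_sum]
    unfold poisCDF
    rw [show n - 1 + 1 = n by omega]
  have hden : (∫ θ in Set.Ioi (0 : ℝ), pois (b + θ) n * Real.exp (-α * θ))
      = (Real.exp (α * b) / (1 + α) ^ (n + 1)) * poisCDF m n := by
    have hexp : ∀ θ : ℝ, pois (b + θ) n * Real.exp (-α * θ)
        = ∑ k ∈ Finset.range (n + 1), jointBX b θ k n * Real.exp (-α * θ) := by
      intro θ; rw [pois_expand, Finset.sum_mul]
    simp_rw [hexp]
    rw [integral_finset_sum _ (fun k _ => integrable_jointBX b α hα k n),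
      Finset.sum_congr rfl
        (fun k hk => integral_jointBX b α hα (Nat.lt_succ_iff.mp (Finset.mem_range.mp hk))),
      ← Finset.mul_sum]
    rfl
  constructor
  · rw [hnum, hden, mul_div_mul_left _ _ hC]
  · have h0 : poisCDF m n ≠ 0 := (hF n).ne'
    have hstep : poisCDF m n = poisCDF m (n - 1) + pois m n := by
      unfold poisCDF
      rw [show n - 1 + 1 = n by omega, Finset.sum_range_succ]
    rw [eq_sub_iff_add_eq, ← add_div, ← hstep, div_self h0]
end
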